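/- arXiv:2008.03458 — 2 statements merged into one kernel-verified Lean document; each statement's English description precedes it below -/
import Mathlib

section
/- Let R be a G-graded ring such that Gr_G(R) has at least one edge but no cycles (girth infinite). Then R is G-graded local (has a unique graded maximal left ideal M), and Gr_G(R) is a star graph with center M: every other proper nontrivial graded left ideal is contained in M and no two non-central vertices are adjacent. -/
variable {G R : Type*} [AddGroup G] [DecidableEq G] [Ring R]

/-- The set of proper nontrivial `G`-graded left ideals of `R`. -/
def hV (𝒜 : G → AddSubgroup R) [GradedRing 𝒜] : Set (Ideal R) :=
  {I | I ≠ ⊥ ∧ I ≠ ⊤ ∧ Ideal.IsHomogeneous 𝒜 I}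

/-- The intersection graph on a set of (left) ideals: two distinct ideals are
adjacent iff their intersection is nonzero. -/
def interGraph (V : Set (Ideal R)) : SimpleGraph V where
  Adj I J := I ≠ J ∧ (I : Ideal R) ⊓ (J : Ideal R) ≠ ⊥
  symm := ⟨fun I J ⟨h1, h2⟩ => ⟨h1.symm, by rwa [inf_comm] at h2⟩⟩
  loopless := ⟨fun I ⟨h1, _⟩ => h1 rfl⟩

/-!
Without triangles in the intersection graph, two vertices with a nonzero meet are comparable
(otherwise they form a triangle with their meet), and there is no chain `a < b < c` of vertices.
An edge therefore gives vertices `i < m`. If a vertex `k` were not below `m`, then `k ⊓ m = 0`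
by comparability, so modularity gives `(i ⊔ k) ⊓ m = i`; hence `i ⊔ k` is proper (else `m = i`)
and meets `m` nontrivially, but is comparable with `m` in neither direction. So `m` is the
greatest vertex, i.e. the unique graded maximal left ideal, and since any two other vertices
meeting nontrivially would form a triangle with `m`, the graph is a star centred at `m`.
-/

section Lattice

variable {α : Type*} [Lattice α] [BoundedOrder α]

/-- The intersection graph of `V` (`a` and `b` adjacent iff `a ⊓ b ≠ ⊥`) has no triangle. -/
def MeetTriangleFree (V : Set α) : Prop :=
  ∀ ⦃a b c⦄, a ∈ V → b ∈ V → c ∈ V → a ≠ b → b ≠ c → c ≠ a →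
    a ⊓ b ≠ ⊥ → b ⊓ c ≠ ⊥ → c ⊓ a ≠ ⊥ → False

namespace MeetTriangleFree

variable {V : Set α}

theorem le_or_le_of_inf_ne_bot (hT : MeetTriangleFree V)
    (hinf : ∀ a ∈ V, ∀ b ∈ V, a ⊓ b ≠ ⊥ → a ⊓ b ∈ V)
    {a b : α} (ha : a ∈ V) (hb : b ∈ V) (hab : a ⊓ b ≠ ⊥) : a ≤ b ∨ b ≤ a := by
  by_contra! h
  obtain ⟨hnab, hnba⟩ := h
  refine hT ha hb (hinf a ha b hb hab) (fun h => hnab h.le) (fun h => hnba (h ▸ inf_le_left))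
    (fun h => hnab (h ▸ inf_le_right)) hab ?_ ?_
  · rwa [inf_of_le_right inf_le_right]
  · rwa [inf_of_le_left inf_le_left]

theorem false_of_lt_of_lt (hT : MeetTriangleFree V) (hbot : ⊥ ∉ V) {a b c : α}
    (ha : a ∈ V) (hb : b ∈ V) (hc : c ∈ V) (hab : a < b) (hbc : b < c) : False := by
  have ha₀ : a ≠ ⊥ := fun h => hbot (h ▸ ha)
  refine hT ha hb hc hab.ne hbc.ne (hab.trans hbc).ne' ?_ ?_ ?_
  · rwa [inf_of_le_left hab.le]
  · rw [inf_of_le_left hbc.le]; exact fun h => hbot (h ▸ hb)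
  · rwa [inf_of_le_right (hab.trans hbc).le]

theorem isGreatest_of_lt [IsModularLattice α] (hT : MeetTriangleFree V) (hbot : ⊥ ∉ V)
    (hinf : ∀ a ∈ V, ∀ b ∈ V, a ⊓ b ≠ ⊥ → a ⊓ b ∈ V)
    (hsup : ∀ a ∈ V, ∀ b ∈ V, a ⊔ b ≠ ⊤ → a ⊔ b ∈ V)
    {i m : α} (hi : i ∈ V) (hm : m ∈ V) (him : i < m) : IsGreatest V m := by
  refine ⟨hm, fun k hk => ?_⟩
  by_contra hkm
  have hkm₀ : k ⊓ m = ⊥ := by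
    by_contra hne
    refine (hT.le_or_le_of_inf_ne_bot hinf hk hm hne).elim hkm fun hmk => ?_
    exact hT.false_of_lt_of_lt hbot hi hm hk him (hmk.lt_of_ne fun h => hkm (h ▸ le_rfl))
  have hmeet : (i ⊔ k) ⊓ m = i := by
    rw [sup_inf_assoc_of_le k him.le, hkm₀, sup_bot_eq]
  have hik : i ⊔ k ≠ ⊤ := fun h => him.ne (by rw [h, top_inf_eq] at hmeet; exact hmeet.symm)
  have hmeet₀ : (i ⊔ k) ⊓ m ≠ ⊥ := by
    rw [hmeet]; exact fun h => hbot (h ▸ hi)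
  rcases hT.le_or_le_of_inf_ne_bot hinf (hsup i hi k hk hik) hm hmeet₀ with h | h
  · exact hkm (le_sup_right.trans h)
  · exact him.ne (by rw [← hmeet, inf_of_le_right h])

theorem exists_isGreatest [IsModularLattice α] (hT : MeetTriangleFree V) (hbot : ⊥ ∉ V)
    (hinf : ∀ a ∈ V, ∀ b ∈ V, a ⊓ b ≠ ⊥ → a ⊓ b ∈ V)
    (hsup : ∀ a ∈ V, ∀ b ∈ V, a ⊔ b ≠ ⊤ → a ⊔ b ∈ V)
    {a b : α} (ha : a ∈ V) (hb : b ∈ V) (hne : a ≠ b) (hab : a ⊓ b ≠ ⊥) :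
    ∃ m, IsGreatest V m := by
  rcases hT.le_or_le_of_inf_ne_bot hinf ha hb hab with h | h
  · exact ⟨b, hT.isGreatest_of_lt hbot hinf hsup ha hb (h.lt_of_ne hne)⟩
  · exact ⟨a, hT.isGreatest_of_lt hbot hinf hsup hb ha (h.lt_of_ne hne.symm)⟩

theorem eq_of_inf_ne_bot (hT : MeetTriangleFree V) (hbot : ⊥ ∉ V) {m : α}
    (hm : IsGreatest V m) {j k : α} (hj : j ∈ V) (hk : k ∈ V) (hjm : j ≠ m) (hkm : k ≠ m)
    (hjk : j ⊓ k ≠ ⊥) : j = k := by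
  by_contra hne
  refine hT hj hk hm.1 hne hkm hjm.symm hjk ?_ ?_
  · rw [inf_of_le_left (hm.2 hk)]; exact fun h => hbot (h ▸ hk)
  · rw [inf_of_le_right (hm.2 hj)]; exact fun h => hbot (h ▸ hj)

end MeetTriangleFree

end Lattice

theorem meetTriangleFree_of_cliqueFree {V : Set (Ideal R)}
    (h : (interGraph V).CliqueFree 3) : MeetTriangleFree V := by
  intro a b c ha hb hc hab hbc hca h₁ h₂ h₃
  refine h {⟨a, ha⟩, ⟨b, hb⟩, ⟨c, hc⟩} (SimpleGraph.is3Clique_triple_iff.mpr ⟨?_, ?_, ?_⟩)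
  · exact ⟨fun h => hab (congrArg Subtype.val h), h₁⟩
  · exact ⟨fun h => hca (congrArg Subtype.val h).symm, by rwa [inf_comm]⟩
  · exact ⟨fun h => hbc (congrArg Subtype.val h), h₂⟩

section Graded

variable {𝒜 : G → AddSubgroup R} [GradedRing 𝒜]

theorem bot_notMem_hV : ⊥ ∉ hV 𝒜 := fun h => h.1 rfl

theorem inf_mem_hV {I J : Ideal R} (hI : I ∈ hV 𝒜) (hJ : J ∈ hV 𝒜) (h : I ⊓ J ≠ ⊥) :
    I ⊓ J ∈ hV 𝒜 :=
  ⟨h, ne_top_of_le_ne_top hI.2.1 inf_le_left, hI.2.2.inf hJ.2.2⟩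

theorem sup_mem_hV {I J : Ideal R} (hI : I ∈ hV 𝒜) (hJ : J ∈ hV 𝒜) (h : I ⊔ J ≠ ⊤) :
    I ⊔ J ∈ hV 𝒜 :=
  ⟨ne_bot_of_le_ne_bot hI.1 le_sup_left, h, hI.2.2.sup hJ.2.2⟩

theorem eq_top_of_isGreatest_hV_of_lt {M J : Ideal R} (hM : IsGreatest (hV 𝒜) M)
    (hJ : J.IsHomogeneous 𝒜) (hMJ : M < J) : J = ⊤ := by
  by_contra hJ_top
  exact hMJ.not_ge (hM.2 ⟨ne_bot_of_le_ne_bot hM.1.1 hMJ.le, hJ_top, hJ⟩)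

theorem eq_of_isGreatest_hV {M J : Ideal R} (hM : IsGreatest (hV 𝒜) M)
    (hJ : J.IsHomogeneous 𝒜) (hJ_top : J ≠ ⊤)
    (hJ_max : ∀ K : Ideal R, K.IsHomogeneous 𝒜 → J < K → K = ⊤) : J = M := by
  have hJ_bot : J ≠ ⊥ := by
    rintro rfl
    exact hM.1.2.1 (hJ_max M hM.1.2.2 (bot_lt_iff_ne_bot.mpr hM.1.1))
  refine (hM.2 ⟨hJ_bot, hJ_top, hJ⟩).eq_of_not_lt fun hJM => ?_
  exact hM.1.2.1 (hJ_max M hM.1.2.2 hJM)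

end Graded

/-- If the intersection graph of graded left ideals has at least one
edge but no cycles (infinite girth), then `R` is `G`-graded local with unique graded
maximal left ideal `M`, and the graph is a star with center `M`: every other vertex
is contained in (hence adjacent to) `M`, and no two non-central vertices are
adjacent. -/
theorem stmt10 (𝒜 : G → AddSubgroup R) [GradedRing 𝒜]
    (hEdge : ∃ I J : hV 𝒜, (interGraph (hV 𝒜)).Adj I J)
    (hGirth : (interGraph (hV 𝒜)).egirth = ⊤) :
    ∃ M ∈ hV 𝒜,
      (∀ J : Ideal R, Ideal.IsHomogeneous 𝒜 J → M < J → J = ⊤) ∧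
      (∀ J : Ideal R, Ideal.IsHomogeneous 𝒜 J → J ≠ ⊤ →
        (∀ K : Ideal R, Ideal.IsHomogeneous 𝒜 K → J < K → K = ⊤) → J = M) ∧
      (∀ J ∈ hV 𝒜, J ≠ M → J ≤ M) ∧
      (∀ (hM : M ∈ hV 𝒜) (J K : hV 𝒜), J ≠ ⟨M, hM⟩ → K ≠ ⟨M, hM⟩ →
        ¬ (interGraph (hV 𝒜)).Adj J K) := by
  have hT : MeetTriangleFree (hV 𝒜) := meetTriangleFree_of_cliqueFree <|
    (SimpleGraph.egirth_eq_top.mp hGirth).cliqueFree le_rfl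
  have hinf : ∀ I ∈ hV 𝒜, ∀ J ∈ hV 𝒜, I ⊓ J ≠ ⊥ → I ⊓ J ∈ hV 𝒜 :=
    fun _ hI _ hJ => inf_mem_hV hI hJ
  have hsup : ∀ I ∈ hV 𝒜, ∀ J ∈ hV 𝒜, I ⊔ J ≠ ⊤ → I ⊔ J ∈ hV 𝒜 :=
    fun _ hI _ hJ => sup_mem_hV hI hJ
  obtain ⟨⟨I, hI⟩, ⟨J, hJ⟩, hIJ, hIJ₀⟩ := hEdge
  obtain ⟨M, hM⟩ := hT.exists_isGreatest bot_notMem_hV hinf hsup hI hJ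
    (fun h => hIJ (Subtype.ext h)) hIJ₀
  refine ⟨M, hM.1, fun J => eq_top_of_isGreatest_hV_of_lt hM,
    fun J => eq_of_isGreatest_hV hM, fun J hJ _ => hM.2 hJ, ?_⟩
  intro _ ⟨J, hJ⟩ ⟨K, hK⟩ hJM hKM ⟨hJK, hJK₀⟩
  refine hJK (Subtype.ext (hT.eq_of_inf_ne_bot bot_notMem_hV hM hJ hK ?_ ?_ hJK₀))
  · exact fun h => hJM (Subtype.ext h)
  · exact fun h => hKM (Subtype.ext h)
end

section
/- Let (R,G) be a left e-faithful graded ring. Then the intersection graph G(R_e) of left ideals of R_e is connected if and only if the intersection graph Gr_G(R) of graded left ideals of R is connected. -/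
variable {G R : Type*} [AddGroup G] [DecidableEq G] [Ring R]

/-- The set of proper nontrivial left ideals of the identity component `R_e = 𝒜 0`. -/
def V0 (𝒜 : G → AddSubgroup R) [GradedRing 𝒜] : Set (Ideal ↥(𝒜 0)) :=
  {I | I ≠ ⊥ ∧ I ≠ ⊤}

/-!
Extension `I ↦ R·I` and contraction `J ↦ J ∩ R_e` move vertices between the two graphs and
preserve nonzero intersections; the contraction of a nonzero graded ideal is nonzero by
`e`-faithfulness. Contraction undoes extension, and every graded ideal `J` contains the
extension of its contraction, which is nonzero, so `J` is adjacent or equal to it. Hence a path in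
either graph maps to a path in the other, and every vertex lies within reach of the image.
-/

open DirectSum

namespace SimpleGraph

variable {V W : Type*} {Γ : SimpleGraph V} {Δ : SimpleGraph W}

theorem Reachable.map_of_adj {f : V → W} (hf : ∀ u v, Γ.Adj u v → Δ.Reachable (f u) (f v))
    {u v : V} (huv : Γ.Reachable u v) : Δ.Reachable (f u) (f v) := by
  rw [reachable_iff_reflTransGen] at huv ⊢
  exact Relation.ReflTransGen.lift' f
    (fun a b hab => (reachable_iff_reflTransGen _ _).mp (hf a b hab)) u v huv

theorem Connected.of_map (hΓ : Γ.Connected) (f : V → W)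
    (hf : ∀ u v, Γ.Adj u v → Δ.Reachable (f u) (f v)) (hcover : ∀ w, ∃ v, Δ.Reachable (f v) w) :
    Δ.Connected := by
  have : Nonempty W := hΓ.nonempty.map f
  refine Connected.mk fun w w' => ?_
  obtain ⟨v, hv⟩ := hcover w
  obtain ⟨v', hv'⟩ := hcover w'
  exact hv.symm.trans ((hΓ.preconnected v v').map_of_adj hf |>.trans hv')

end SimpleGraph

theorem interGraph_reachable_of_inf_ne_bot {V : Set (Ideal R)} {I J : V}
    (h : (I : Ideal R) ⊓ J ≠ ⊥) : (interGraph V).Reachable I J := by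
  by_cases hIJ : I = J
  · rw [hIJ]
  · exact SimpleGraph.Adj.reachable ⟨hIJ, h⟩

def gradeZeroSubtype (𝒜 : G → AddSubgroup R) [GradedRing 𝒜] : 𝒜 0 →+* R :=
  (SetLike.GradeZero.subring 𝒜).subtype

section GradeZero

variable {𝒜 : G → AddSubgroup R} [GradedRing 𝒜]

@[simp]
theorem gradeZeroSubtype_apply (x : 𝒜 0) : gradeZeroSubtype 𝒜 x = x := rfl

theorem gradeZeroSubtype_injective : Function.Injective (gradeZeroSubtype 𝒜) :=
  Subtype.val_injective

theorem decompose_zero_mem_of_mem_map {I : Ideal (𝒜 0)} {x : R}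
    (hx : x ∈ I.map (gradeZeroSubtype 𝒜)) : decompose 𝒜 x 0 ∈ I := by
  obtain ⟨n, c, g, rfl⟩ := Submodule.mem_span_set'.mp hx
  rw [decompose_sum, DFinsupp.finsetSum_apply]
  refine sum_mem fun i _ => ?_
  obtain ⟨a, ha, hga⟩ := (g i).2
  have hmul : decompose 𝒜 (c i • (g i : R)) 0 = decompose 𝒜 (c i) 0 * a := by
    ext
    rw [← hga, smul_eq_mul, gradeZeroSubtype_apply, coe_decompose_mul_of_right_mem_zero 𝒜 a.2]
    rfl
  rw [hmul]
  exact I.mul_mem_left _ ha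

theorem comap_map_gradeZeroSubtype (I : Ideal (𝒜 0)) :
    (I.map (gradeZeroSubtype 𝒜)).comap (gradeZeroSubtype 𝒜) = I := by
  refine le_antisymm (fun x hx => ?_) Ideal.le_comap_map
  have hx0 : decompose 𝒜 (x : R) 0 = x := Subtype.ext (decompose_of_mem_same 𝒜 x.2)
  simpa only [gradeZeroSubtype_apply, hx0] using decompose_zero_mem_of_mem_map hx

theorem isHomogeneous_map_gradeZeroSubtype (I : Ideal (𝒜 0)) :
    (I.map (gradeZeroSubtype 𝒜)).IsHomogeneous 𝒜 :=
  Ideal.homogeneous_span 𝒜 _ (by rintro _ ⟨x, -, rfl⟩; exact ⟨0, x.2⟩)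

theorem map_gradeZeroSubtype_ne_bot {I : Ideal (𝒜 0)} (hI : I ≠ ⊥) :
    I.map (gradeZeroSubtype 𝒜) ≠ ⊥ :=
  (Ideal.map_eq_bot_iff_of_injective gradeZeroSubtype_injective).not.mpr hI

theorem map_gradeZeroSubtype_ne_top {I : Ideal (𝒜 0)} (hI : I ≠ ⊤) :
    I.map (gradeZeroSubtype 𝒜) ≠ ⊤ := fun h =>
  hI (by rw [← comap_map_gradeZeroSubtype I, h, Ideal.comap_top])

/-- A homogeneous component `x_τ ≠ 0` of an element of `I` lies in `I`, and faithfulness gives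
`r ∈ 𝒜 (-τ)` with `r * x_τ` a nonzero element of `I ∩ R_e`. -/
theorem comap_gradeZeroSubtype_ne_bot
    (hfaith : ∀ (τ : G), ∀ x ∈ 𝒜 τ, x ≠ 0 → ∃ r ∈ 𝒜 (-τ), r * x ≠ 0)
    {I : Ideal R} (hhom : I.IsHomogeneous 𝒜) (hI : I ≠ ⊥) :
    I.comap (gradeZeroSubtype 𝒜) ≠ ⊥ := by
  obtain ⟨x, hxI, hx0⟩ := Submodule.exists_mem_ne_zero_of_ne_bot hI
  obtain ⟨τ, hτ⟩ : ∃ τ, (decompose 𝒜 x τ : R) ≠ 0 := by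
    by_contra! h
    exact hx0 ((decompose 𝒜).injective (by ext τ; simp [h τ]))
  obtain ⟨r, hr, hrx⟩ := hfaith τ _ (decompose 𝒜 x τ).2 hτ
  have hdeg : r * (decompose 𝒜 x τ : R) ∈ 𝒜 0 := by
    simpa only [neg_add_cancel] using SetLike.mul_mem_graded hr (decompose 𝒜 x τ).2
  refine (Submodule.ne_bot_iff _).mpr ⟨⟨_, hdeg⟩, I.mul_mem_left r (hhom τ hxI), ?_⟩
  exact fun h => hrx (congrArg Subtype.val h)

end GradeZero

section Vertices

variable {𝒜 : G → AddSubgroup R} [GradedRing 𝒜]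

def extendVertex (I : V0 𝒜) : hV 𝒜 :=
  ⟨I.1.map (gradeZeroSubtype 𝒜),
    map_gradeZeroSubtype_ne_bot I.2.1, map_gradeZeroSubtype_ne_top I.2.2, isHomogeneous_map_gradeZeroSubtype I.1⟩

def contractVertex (hfaith : ∀ (τ : G), ∀ x ∈ 𝒜 τ, x ≠ 0 → ∃ r ∈ 𝒜 (-τ), r * x ≠ 0)
    (J : hV 𝒜) : V0 𝒜 :=
  ⟨J.1.comap (gradeZeroSubtype 𝒜), comap_gradeZeroSubtype_ne_bot hfaith J.2.2.2 J.2.1,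
    Ideal.comap_ne_top _ J.2.2.1⟩

theorem coe_extendVertex (I : V0 𝒜) :
    (extendVertex I : Ideal R) = (I : Ideal (𝒜 0)).map (gradeZeroSubtype 𝒜) := rfl

theorem coe_contractVertex (hfaith : ∀ (τ : G), ∀ x ∈ 𝒜 τ, x ≠ 0 → ∃ r ∈ 𝒜 (-τ), r * x ≠ 0)
    (J : hV 𝒜) :
    (contractVertex hfaith J : Ideal (𝒜 0)) = (J : Ideal R).comap (gradeZeroSubtype 𝒜) := rfl

theorem reachable_extendVertex_of_adj {I I' : V0 𝒜}
    (h : (interGraph (V0 𝒜)).Adj I I') :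
    (interGraph (hV 𝒜)).Reachable (extendVertex I) (extendVertex I') := by
  exact interGraph_reachable_of_inf_ne_bot
    (ne_bot_of_le_ne_bot (map_gradeZeroSubtype_ne_bot h.2) (Ideal.map_inf_le _))

variable (hfaith : ∀ (τ : G), ∀ x ∈ 𝒜 τ, x ≠ 0 → ∃ r ∈ 𝒜 (-τ), r * x ≠ 0)
include hfaith

theorem contractVertex_extendVertex (I : V0 𝒜) : contractVertex hfaith (extendVertex I) = I :=
  Subtype.ext (comap_map_gradeZeroSubtype I.1)

theorem reachable_extendVertex_contractVertex (J : hV 𝒜) :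
    (interGraph (hV 𝒜)).Reachable (extendVertex (contractVertex hfaith J)) J := by
  refine interGraph_reachable_of_inf_ne_bot ?_
  rw [coe_extendVertex, coe_contractVertex, inf_eq_left.mpr Ideal.map_comap_le]
  exact (extendVertex (contractVertex hfaith J)).2.1

theorem reachable_contractVertex_of_adj {J J' : hV 𝒜} (h : (interGraph (hV 𝒜)).Adj J J') :
    (interGraph (V0 𝒜)).Reachable (contractVertex hfaith J) (contractVertex hfaith J') := by
  refine interGraph_reachable_of_inf_ne_bot ?_
  rw [coe_contractVertex, coe_contractVertex, ← Ideal.comap_inf]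
  exact comap_gradeZeroSubtype_ne_bot hfaith (J.2.2.2.inf J'.2.2.2) h.2

end Vertices

/-- For a left `e`-faithful grading, the intersection graph of left
ideals of `R_e` is connected iff the intersection graph of graded left ideals of
`R` is connected. -/
theorem stmt13 (𝒜 : G → AddSubgroup R) [GradedRing 𝒜]
    (hfaith : ∀ (τ : G), ∀ x ∈ 𝒜 τ, x ≠ 0 → ∃ r ∈ 𝒜 (-τ), r * x ≠ 0) :
    (interGraph (V0 𝒜)).Connected ↔ (interGraph (hV 𝒜)).Connected := by
  constructor
  · intro h
    exact h.of_map extendVertex (fun _ _ => reachable_extendVertex_of_adj)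
      fun J => ⟨_, reachable_extendVertex_contractVertex hfaith J⟩
  · intro h
    exact h.of_map (contractVertex hfaith) (fun _ _ => reachable_contractVertex_of_adj hfaith)
      fun I => ⟨extendVertex I, by rw [contractVertex_extendVertex hfaith]⟩
end
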